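/- arXiv:2303.11246 — 2 statements merged into one kernel-verified Lean document; each statement's English description precedes it below -/
import Mathlib

section
/- For each n ∈ ℕ let Fₙ be the finite poset with underlying set {r} ∪ {aᵢ, bᵢ, cᵢ : 0 ≤ i ≤ n}, partially ordered as the reflexive-transitive closure of the covering relations: r < aₙ, r < bₙ, r < cₙ, and for all 0 ≤ i < n: aᵢ₊₁ < aᵢ, aᵢ₊₁ < bᵢ, bᵢ₊₁ < aᵢ, bᵢ₊₁ < cᵢ, cᵢ₊₁ < cᵢ, cᵢ₊₁ < bᵢ. Then for every n ∈ ℕ the relation ∼ₙ on Fₙ is the equality relation: for all x, y ∈ Fₙ, x ∼ₙ y implies x = y. -/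
/-- The set of maximal elements above `x`, w.r.t. an explicit order relation. -/
def MsetR {P : Type*} (le : P → P → Prop) (x : P) : Set P :=
  {m | le x m ∧ ∀ y, le m y → y = m}

/-- The bounded bisimulation relations `∼ₙ`, w.r.t. an explicit order relation. -/
def simR {P : Type*} (le : P → P → Prop) : ℕ → P → P → Prop
  | 0, x, y => MsetR le x = MsetR le y
  | n + 1, x, y =>
      (∀ z, le x z → ∃ w, le y w ∧ simR le n z w) ∧
      (∀ w, le y w → ∃ z, le x z ∧ simR le n z w)

/-- The carrier of the poset `Fₙ`: a root `r` and elements `aᵢ, bᵢ, cᵢ` for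
`0 ≤ i ≤ n`. -/
inductive FElt (n : ℕ) : Type
  | r : FElt n
  | a : Fin (n + 1) → FElt n
  | b : Fin (n + 1) → FElt n
  | c : Fin (n + 1) → FElt n
  deriving DecidableEq

/-- The covering relations of `Fₙ`: `r < aₙ, bₙ, cₙ` and, for `i < n`:
`aᵢ₊₁ < aᵢ`, `aᵢ₊₁ < bᵢ`, `bᵢ₊₁ < aᵢ`, `bᵢ₊₁ < cᵢ`, `cᵢ₊₁ < cᵢ`, `cᵢ₊₁ < bᵢ`. -/
def cov15 (n : ℕ) : FElt n → FElt n → Prop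
  | .r, .a i => (i : ℕ) = n
  | .r, .b i => (i : ℕ) = n
  | .r, .c i => (i : ℕ) = n
  | .a i, .a j => (i : ℕ) = (j : ℕ) + 1
  | .a i, .b j => (i : ℕ) = (j : ℕ) + 1
  | .b i, .a j => (i : ℕ) = (j : ℕ) + 1
  | .b i, .c j => (i : ℕ) = (j : ℕ) + 1
  | .c i, .c j => (i : ℕ) = (j : ℕ) + 1
  | .c i, .b j => (i : ℕ) = (j : ℕ) + 1
  | _, _ => False

/-- The order of `Fₙ`: the reflexive-transitive closure of the covering
relations. -/
def Fle (n : ℕ) : FElt n → FElt n → Prop := Relation.ReflTransGen (cov15 n)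

namespace S15

def lev {n : ℕ} : FElt n → ℕ
  | .r => n + 1
  | .a i => i
  | .b i => i
  | .c i => i

def le' {n : ℕ} : FElt n → FElt n → Prop
  | .r, _ => True
  | .a i, .a j => (i : ℕ) = j ∨ (i : ℕ) = (j : ℕ) + 1 ∨ (j : ℕ) + 2 ≤ i
  | .a i, .b j => (i : ℕ) = (j : ℕ) + 1 ∨ (j : ℕ) + 2 ≤ i
  | .a i, .c j => (j : ℕ) + 2 ≤ i
  | .b i, .a j => (i : ℕ) = (j : ℕ) + 1 ∨ (j : ℕ) + 2 ≤ i
  | .b i, .b j => (i : ℕ) = j ∨ (j : ℕ) + 2 ≤ i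
  | .b i, .c j => (i : ℕ) = (j : ℕ) + 1 ∨ (j : ℕ) + 2 ≤ i
  | .c i, .a j => (j : ℕ) + 2 ≤ i
  | .c i, .b j => (i : ℕ) = (j : ℕ) + 1 ∨ (j : ℕ) + 2 ≤ i
  | .c i, .c j => (i : ℕ) = j ∨ (i : ℕ) = (j : ℕ) + 1 ∨ (j : ℕ) + 2 ≤ i
  | _, .r => False

lemma le'_refl {n : ℕ} (x : FElt n) : le' x x := by
  cases x <;> simp [le']

lemma le'_tail {n : ℕ} {x y z : FElt n} (h1 : le' x y) (h2 : cov15 n y z) : le' x z := by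
  cases x <;> cases y <;> cases z <;> simp_all [le', cov15] <;> omega

lemma Fle_le' {n : ℕ} {x y : FElt n} (h : Fle n x y) : le' x y := by
  induction h with
  | refl => exact le'_refl x
  | tail _ hc ih => exact le'_tail ih hc

lemma gap_path {n : ℕ} : ∀ (m : ℕ) (x y : FElt n), lev x ≤ m → x ≠ .r → le' x y → Fle n x y := by
  intro m
  induction m with
  | zero =>
    intro x y hx hr h
    have hxy : x = y := by
      cases x <;> cases y <;> simp_all [le', lev, Fin.ext_iff, -Fin.val_eq_zero_iff] <;> omega
    subst hxy; exact Relation.ReflTransGen.refl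
  | succ m ih =>
    intro x y hx hr h
    cases x with
    | r => exact absurd rfl hr
    | a i =>
      simp only [lev] at hx
      cases y with
      | r => exact h.elim
      | a j =>
        rcases h with h | h | h
        · have : i = j := Fin.ext h; subst this; exact Relation.ReflTransGen.refl
        · exact Relation.ReflTransGen.single h
        · have hb : (i:ℕ) - 1 < n + 1 := by have := i.isLt; omega
          refine Relation.ReflTransGen.head (b := FElt.a ⟨(i:ℕ)-1, hb⟩) ?_ (ih _ _ ?_ (by simp) ?_)
          · simp [cov15]; omega
          · simp [lev]; omega
          · simp [le']; omega
      | b j =>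
        rcases h with h | h
        · exact Relation.ReflTransGen.single h
        · have hb : (i:ℕ) - 1 < n + 1 := by have := i.isLt; omega
          refine Relation.ReflTransGen.head (b := FElt.a ⟨(i:ℕ)-1, hb⟩) ?_ (ih _ _ ?_ (by simp) ?_)
          · simp [cov15]; omega
          · simp [lev]; omega
          · simp [le']; omega
      | c j =>
        have h : (j:ℕ) + 2 ≤ (i:ℕ) := h
        · have hb : (i:ℕ) - 1 < n + 1 := by have := i.isLt; omega
          refine Relation.ReflTransGen.head (b := FElt.b ⟨(i:ℕ)-1, hb⟩) ?_ (ih _ _ ?_ (by simp) ?_)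
          · simp [cov15]; omega
          · simp [lev]; omega
          · simp [le']; omega
    | b i =>
      simp only [lev] at hx
      cases y with
      | r => exact h.elim
      | a j =>
        rcases h with h | h
        · exact Relation.ReflTransGen.single h
        · have hb : (i:ℕ) - 1 < n + 1 := by have := i.isLt; omega
          refine Relation.ReflTransGen.head (b := FElt.a ⟨(i:ℕ)-1, hb⟩) ?_ (ih _ _ ?_ (by simp) ?_)
          · simp [cov15]; omega
          · simp [lev]; omega
          · simp [le']; omega
      | b j =>
        rcases h with h | h
        · have : i = j := Fin.ext h; subst this; exact Relation.ReflTransGen.refl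
        · have hb : (i:ℕ) - 1 < n + 1 := by have := i.isLt; omega
          refine Relation.ReflTransGen.head (b := FElt.a ⟨(i:ℕ)-1, hb⟩) ?_ (ih _ _ ?_ (by simp) ?_)
          · simp [cov15]; omega
          · simp [lev]; omega
          · simp [le']; omega
      | c j =>
        rcases h with h | h
        · exact Relation.ReflTransGen.single h
        · have hb : (i:ℕ) - 1 < n + 1 := by have := i.isLt; omega
          refine Relation.ReflTransGen.head (b := FElt.c ⟨(i:ℕ)-1, hb⟩) ?_ (ih _ _ ?_ (by simp) ?_)
          · simp [cov15]; omega
          · simp [lev]; omega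
          · simp [le']; omega
    | c i =>
      simp only [lev] at hx
      cases y with
      | r => exact h.elim
      | a j =>
        have h : (j:ℕ) + 2 ≤ (i:ℕ) := h
        · have hb : (i:ℕ) - 1 < n + 1 := by have := i.isLt; omega
          refine Relation.ReflTransGen.head (b := FElt.b ⟨(i:ℕ)-1, hb⟩) ?_ (ih _ _ ?_ (by simp) ?_)
          · simp [cov15]; omega
          · simp [lev]; omega
          · simp [le']; omega
      | b j =>
        rcases h with h | h
        · exact Relation.ReflTransGen.single h
        · have hb : (i:ℕ) - 1 < n + 1 := by have := i.isLt; omega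
          refine Relation.ReflTransGen.head (b := FElt.c ⟨(i:ℕ)-1, hb⟩) ?_ (ih _ _ ?_ (by simp) ?_)
          · simp [cov15]; omega
          · simp [lev]; omega
          · simp [le']; omega
      | c j =>
        rcases h with h | h | h
        · have : i = j := Fin.ext h; subst this; exact Relation.ReflTransGen.refl
        · exact Relation.ReflTransGen.single h
        · have hb : (i:ℕ) - 1 < n + 1 := by have := i.isLt; omega
          refine Relation.ReflTransGen.head (b := FElt.c ⟨(i:ℕ)-1, hb⟩) ?_ (ih _ _ ?_ (by simp) ?_)
          · simp [cov15]; omega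
          · simp [lev]; omega
          · simp [le']; omega


lemma lev_le_n {n : ℕ} (x : FElt n) : lev x ≤ n + 1 := by
  cases x <;> simp [lev] <;> exact Nat.le_of_lt_succ (Fin.isLt _) |>.trans (Nat.le_succ n)

lemma r_le {n : ℕ} (y : FElt n) : Fle n (.r) y := by
  cases y with
  | r => exact Relation.ReflTransGen.refl
  | a j =>
    by_cases hj : (j:ℕ) = n
    · exact Relation.ReflTransGen.single (show cov15 n _ (FElt.a j) from hj)
    · have hjn : (j:ℕ) < n := lt_of_le_of_ne (Nat.le_of_lt_succ j.isLt) hj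
      refine Relation.ReflTransGen.head (b := FElt.a ⟨n, n.lt_succ_self⟩) (by simp [cov15])
        (gap_path n _ _ (by simp [lev]) (by simp) ?_)
      simp [le']; omega
  | b j =>
    by_cases hj : (j:ℕ) = n
    · exact Relation.ReflTransGen.single (show cov15 n _ (FElt.b j) from hj)
    · have hjn : (j:ℕ) < n := lt_of_le_of_ne (Nat.le_of_lt_succ j.isLt) hj
      refine Relation.ReflTransGen.head (b := FElt.a ⟨n, n.lt_succ_self⟩) (by simp [cov15])
        (gap_path n _ _ (by simp [lev]) (by simp) ?_)
      simp [le']; omega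
  | c j =>
    by_cases hj : (j:ℕ) = n
    · exact Relation.ReflTransGen.single (show cov15 n _ (FElt.c j) from hj)
    · have hjn : (j:ℕ) < n := lt_of_le_of_ne (Nat.le_of_lt_succ j.isLt) hj
      refine Relation.ReflTransGen.head (b := FElt.c ⟨n, n.lt_succ_self⟩) (by simp [cov15])
        (gap_path n _ _ (by simp [lev]) (by simp) ?_)
      simp [le']; omega

lemma Fle_iff {n : ℕ} (x y : FElt n) : Fle n x y ↔ le' x y := by
  constructor
  · exact Fle_le'
  · intro h
    cases x with
    | r => exact r_le y
    | a i => exact gap_path (n+1) _ _ (by simp [lev]) (by simp) h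
    | b i => exact gap_path (n+1) _ _ (by simp [lev]) (by simp) h
    | c i => exact gap_path (n+1) _ _ (by simp [lev]) (by simp) h

lemma lev_le {n : ℕ} {x y : FElt n} (h : Fle n x y) : lev y ≤ lev x := by
  rw [Fle_iff] at h
  cases x with
  | r => exact lev_le_n y
  | a i => cases y <;> simp_all [le', lev] <;> omega
  | b i => cases y <;> simp_all [le', lev] <;> omega
  | c i => cases y <;> simp_all [le', lev] <;> omega

lemma Fle_antisymm {n : ℕ} {x y : FElt n} (h1 : Fle n x y) (h2 : Fle n y x) : x = y := by
  rw [Fle_iff] at h1 h2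
  cases x <;> cases y <;> simp_all [le', Fin.ext_iff] <;> omega

lemma max_of_lev0 {n : ℕ} {m : FElt n} (h0 : lev m = 0) : ∀ z, le' m z → z = m := by
  intro z hz
  cases m <;> cases z <;> simp_all [le', lev, Fin.ext_iff, -Fin.val_eq_zero_iff] <;> omega

lemma mem_MsetR_iff {n : ℕ} (x m : FElt n) :
    m ∈ MsetR (Fle n) x ↔ (le' x m ∧ lev m = 0) := by
  simp only [MsetR, Set.mem_setOf_eq, Fle_iff]
  constructor
  · rintro ⟨h1, h2⟩
    refine ⟨h1, ?_⟩
    by_contra h0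
    cases m with
    | r =>
      exact absurd (h2 (.a ⟨n, n.lt_succ_self⟩) trivial) (by simp)
    | a i =>
      have hb : (i:ℕ) - 1 < n + 1 := by have := i.isLt; omega
      have hi : (0:ℕ) < i := by simp [lev, -Fin.val_eq_zero_iff] at h0; omega
      have := h2 (.a ⟨(i:ℕ)-1, hb⟩) (by simp [le']; omega)
      simp [Fin.ext_iff] at this; omega
    | b i =>
      have hb : (i:ℕ) - 1 < n + 1 := by have := i.isLt; omega
      have hi : (0:ℕ) < i := by simp [lev, -Fin.val_eq_zero_iff] at h0; omega
      have := h2 (.a ⟨(i:ℕ)-1, hb⟩) (by simp [le']; omega)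
      simp [Fin.ext_iff] at this
    | c i =>
      have hb : (i:ℕ) - 1 < n + 1 := by have := i.isLt; omega
      have hi : (0:ℕ) < i := by simp [lev, -Fin.val_eq_zero_iff] at h0; omega
      have := h2 (.c ⟨(i:ℕ)-1, hb⟩) (by simp [le']; omega)
      simp [Fin.ext_iff] at this; omega
  · rintro ⟨h1, h2⟩
    exact ⟨h1, fun z hz => max_of_lev0 h2 z hz⟩

lemma simR_symm {P : Type*} (le : P → P → Prop) :
    ∀ (k : ℕ) (x y : P), simR le k x y → simR le k y x := by
  intro k
  induction k with
  | zero => intro x y h; exact h.symm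
  | succ k ih =>
    intro x y h
    refine ⟨fun z hz => ?_, fun w hw => ?_⟩
    · obtain ⟨w, hw, hs⟩ := h.2 z hz
      exact ⟨w, hw, ih _ _ hs⟩
    · obtain ⟨z, hz, hs⟩ := h.1 w hw
      exact ⟨z, hz, ih _ _ hs⟩

lemma inv {n : ℕ} : ∀ (k : ℕ) (x y : FElt n), simR (Fle n) k x y → lev x ≤ k + 1 → x = y := by
  intro k
  induction k with
  | zero =>
    intro x y h hx
    have h' : MsetR (Fle n) x = MsetR (Fle n) y := h
    have hA : le' x (FElt.a ⟨0, Nat.succ_pos n⟩) ↔ le' y (FElt.a ⟨0, Nat.succ_pos n⟩) := by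
      have h1 := Set.ext_iff.mp h' (FElt.a ⟨0, Nat.succ_pos n⟩)
      rw [mem_MsetR_iff, mem_MsetR_iff] at h1
      exact ⟨fun hh => (h1.mp ⟨hh, rfl⟩).1, fun hh => (h1.mpr ⟨hh, rfl⟩).1⟩
    have hB : le' x (FElt.b ⟨0, Nat.succ_pos n⟩) ↔ le' y (FElt.b ⟨0, Nat.succ_pos n⟩) := by
      have h1 := Set.ext_iff.mp h' (FElt.b ⟨0, Nat.succ_pos n⟩)
      rw [mem_MsetR_iff, mem_MsetR_iff] at h1
      exact ⟨fun hh => (h1.mp ⟨hh, rfl⟩).1, fun hh => (h1.mpr ⟨hh, rfl⟩).1⟩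
    have hC : le' x (FElt.c ⟨0, Nat.succ_pos n⟩) ↔ le' y (FElt.c ⟨0, Nat.succ_pos n⟩) := by
      have h1 := Set.ext_iff.mp h' (FElt.c ⟨0, Nat.succ_pos n⟩)
      rw [mem_MsetR_iff, mem_MsetR_iff] at h1
      exact ⟨fun hh => (h1.mp ⟨hh, rfl⟩).1, fun hh => (h1.mpr ⟨hh, rfl⟩).1⟩
    clear h h'
    cases x with
    | r =>
      simp only [lev] at hx
      cases y with
      | r => rfl
      | a j => have := j.isLt; simp [le'] at hA hB hC; omega
      | b j => have := j.isLt; simp [le'] at hA hB hC; omega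
      | c j => have := j.isLt; simp [le'] at hA hB hC; omega
    | a i => cases y <;> (try simp [lev] at hy2) <;> (try simp [le', lev, Fin.ext_iff, -Fin.val_eq_zero_iff] at hx) <;> (try simp [le', lev, Fin.ext_iff, -Fin.val_eq_zero_iff] at hA) <;> (try simp [le', lev, Fin.ext_iff, -Fin.val_eq_zero_iff] at hB) <;> (try simp [le', lev, Fin.ext_iff, -Fin.val_eq_zero_iff] at hC) <;> (try simp [le', lev, Fin.ext_iff, -Fin.val_eq_zero_iff]) <;> omega
    | b i => cases y <;> (try simp [lev] at hy2) <;> (try simp [le', lev, Fin.ext_iff, -Fin.val_eq_zero_iff] at hx) <;> (try simp [le', lev, Fin.ext_iff, -Fin.val_eq_zero_iff] at hA) <;> (try simp [le', lev, Fin.ext_iff, -Fin.val_eq_zero_iff] at hB) <;> (try simp [le', lev, Fin.ext_iff, -Fin.val_eq_zero_iff] at hC) <;> (try simp [le', lev, Fin.ext_iff, -Fin.val_eq_zero_iff]) <;> omega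
    | c i => cases y <;> (try simp [lev] at hy2) <;> (try simp [le', lev, Fin.ext_iff, -Fin.val_eq_zero_iff] at hx) <;> (try simp [le', lev, Fin.ext_iff, -Fin.val_eq_zero_iff] at hA) <;> (try simp [le', lev, Fin.ext_iff, -Fin.val_eq_zero_iff] at hB) <;> (try simp [le', lev, Fin.ext_iff, -Fin.val_eq_zero_iff] at hC) <;> (try simp [le', lev, Fin.ext_iff, -Fin.val_eq_zero_iff]) <;> omega
  | succ k ih =>
    intro x y h hx
    have forth : ∀ z, Fle n x z → ∃ w, Fle n y w ∧ simR (Fle n) k z w := h.1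
    have back : ∀ w, Fle n y w → ∃ z, Fle n x z ∧ simR (Fle n) k z w := h.2
    rcases Nat.lt_or_ge (lev x) (k+2) with hlt | hge
    · obtain ⟨w, hyw, hs⟩ := forth x Relation.ReflTransGen.refl
      have hxw : x = w := ih x w hs (by omega)
      subst hxw
      obtain ⟨z, hxz, hs2⟩ := back y Relation.ReflTransGen.refl
      have hz : lev z ≤ lev x := lev_le hxz
      have hzy : z = y := ih z y hs2 (by omega)
      subst hzy
      exact Fle_antisymm hxz hyw
    · have hx2 : lev x = k + 2 := le_antisymm hx hge
      have hy2 : k + 2 ≤ lev y := by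
        by_contra hc
        push_neg at hc
        obtain ⟨w, hyw, hs⟩ := forth x Relation.ReflTransGen.refl
        have hw : lev w ≤ lev y := lev_le hyw
        have hwx : w = x := ih w x (simR_symm _ k x w hs) (by omega)
        rw [hwx] at hw; omega
      have H1 : ∀ z, Fle n x z → lev z = k+1 → Fle n y z := by
        intro z hz hlz
        obtain ⟨w, hw, hs⟩ := forth z hz
        have hzw : z = w := ih z w hs (by omega)
        rwa [hzw]
      have H2 : ∀ w, Fle n y w → lev w = k+1 → Fle n x w := by
        intro w hw hlw
        obtain ⟨z, hz, hs⟩ := back w hw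
        have hwz : w = z := ih w z (simR_symm _ k z w hs) (by omega)
        rwa [hwz]
      cases x with
      | r =>
        simp only [lev] at hx2
        cases y with
        | r => rfl
        | a j => have := j.isLt; simp only [lev] at hy2; omega
        | b j => have := j.isLt; simp only [lev] at hy2; omega
        | c j => have := j.isLt; simp only [lev] at hy2; omega
      | a i =>
        simp only [lev] at hx2
        have hb : k + 1 < n + 1 := by have := i.isLt; omega
        have hA := Iff.intro (fun hh => H1 (FElt.a ⟨k+1, hb⟩) hh rfl)
          (fun hh => H2 (FElt.a ⟨k+1, hb⟩) hh rfl)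
        have hB := Iff.intro (fun hh => H1 (FElt.b ⟨k+1, hb⟩) hh rfl)
          (fun hh => H2 (FElt.b ⟨k+1, hb⟩) hh rfl)
        have hC := Iff.intro (fun hh => H1 (FElt.c ⟨k+1, hb⟩) hh rfl)
          (fun hh => H2 (FElt.c ⟨k+1, hb⟩) hh rfl)
        rw [Fle_iff, Fle_iff] at hA hB hC
        clear H1 H2 h
        cases y <;> (try simp [lev] at hy2) <;> (try simp [le', lev, Fin.ext_iff] at hx) <;> (try simp [le', lev, Fin.ext_iff] at hA) <;> (try simp [le', lev, Fin.ext_iff] at hB) <;> (try simp [le', lev, Fin.ext_iff] at hC) <;> (try simp [le', lev, Fin.ext_iff]) <;> omega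
      | b i =>
        simp only [lev] at hx2
        have hb : k + 1 < n + 1 := by have := i.isLt; omega
        have hA := Iff.intro (fun hh => H1 (FElt.a ⟨k+1, hb⟩) hh rfl)
          (fun hh => H2 (FElt.a ⟨k+1, hb⟩) hh rfl)
        have hB := Iff.intro (fun hh => H1 (FElt.b ⟨k+1, hb⟩) hh rfl)
          (fun hh => H2 (FElt.b ⟨k+1, hb⟩) hh rfl)
        have hC := Iff.intro (fun hh => H1 (FElt.c ⟨k+1, hb⟩) hh rfl)
          (fun hh => H2 (FElt.c ⟨k+1, hb⟩) hh rfl)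
        rw [Fle_iff, Fle_iff] at hA hB hC
        clear H1 H2 h
        cases y <;> (try simp [lev] at hy2) <;> (try simp [le', lev, Fin.ext_iff] at hx) <;> (try simp [le', lev, Fin.ext_iff] at hA) <;> (try simp [le', lev, Fin.ext_iff] at hB) <;> (try simp [le', lev, Fin.ext_iff] at hC) <;> (try simp [le', lev, Fin.ext_iff]) <;> omega
      | c i =>
        simp only [lev] at hx2
        have hb : k + 1 < n + 1 := by have := i.isLt; omega
        have hA := Iff.intro (fun hh => H1 (FElt.a ⟨k+1, hb⟩) hh rfl)
          (fun hh => H2 (FElt.a ⟨k+1, hb⟩) hh rfl)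
        have hB := Iff.intro (fun hh => H1 (FElt.b ⟨k+1, hb⟩) hh rfl)
          (fun hh => H2 (FElt.b ⟨k+1, hb⟩) hh rfl)
        have hC := Iff.intro (fun hh => H1 (FElt.c ⟨k+1, hb⟩) hh rfl)
          (fun hh => H2 (FElt.c ⟨k+1, hb⟩) hh rfl)
        rw [Fle_iff, Fle_iff] at hA hB hC
        clear H1 H2 h
        cases y <;> (try simp [lev] at hy2) <;> (try simp [le', lev, Fin.ext_iff] at hx) <;> (try simp [le', lev, Fin.ext_iff] at hA) <;> (try simp [le', lev, Fin.ext_iff] at hB) <;> (try simp [le', lev, Fin.ext_iff] at hC) <;> (try simp [le', lev, Fin.ext_iff]) <;> omega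

end S15

/-- each `Fₙ` is a poset (the reflexive-transitive closure of the
covering relations is antisymmetric) on which the relation `∼ₙ` is equality. -/
theorem stmt15 (n : ℕ) :
    (∀ x y : FElt n, Fle n x y → Fle n y x → x = y) ∧
    (∀ x y : FElt n, simR (Fle n) n x y → x = y) := by
  constructor
  · intro x y h1 h2
    exact S15.Fle_antisymm h1 h2
  · intro x y h
    exact S15.inv n x y h (S15.lev_le_n x)
end

section
/- For each natural number n with n ≥ 3, let Gₙ be the finite poset with underlying set {r} ∪ {aᵢ : 0 ≤ i ≤ n} ∪ {bᵢ : 0 ≤ i ≤ n}, partially ordered as the reflexive-transitive closure of: r < aᵢ and r < bᵢ for all 0 ≤ i ≤ n; a₀ < bⱼ for all 0 ≤ j < n; aₙ < bⱼ for all 0 < j ≤ n; and aᵢ < bⱼ for all 0 < i < n and all j ≠ i. Then Gₙ is strongly regular: for all x, y ∈ Gₙ, M(x) = M(y) implies x = y. -/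
/-- The carrier of the poset `Gₙ`: a root `r` and elements `aᵢ, bᵢ` for
`0 ≤ i ≤ n`. -/
inductive GElt (n : ℕ) : Type
  | r : GElt n
  | a : Fin (n + 1) → GElt n
  | b : Fin (n + 1) → GElt n
  deriving DecidableEq

/-- The strict relations generating `Gₙ`: `r < aᵢ` and `r < bᵢ` for all `i`;
`a₀ < bⱼ` for `j < n`; `aₙ < bⱼ` for `0 < j`; `aᵢ < bⱼ` for `0 < i < n`, `j ≠ i`. -/
def cov16 (n : ℕ) : GElt n → GElt n → Prop
  | .r, .a _ => True
  | .r, .b _ => True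
  | .a i, .b j =>
      ((i : ℕ) = 0 ∧ (j : ℕ) < n) ∨
      ((i : ℕ) = n ∧ 0 < (j : ℕ)) ∨
      (0 < (i : ℕ) ∧ (i : ℕ) < n ∧ (j : ℕ) ≠ (i : ℕ))
  | _, _ => False

/-- The order of `Gₙ`: the reflexive-transitive closure of the generating
relations. -/
def Gle (n : ℕ) : GElt n → GElt n → Prop := Relation.ReflTransGen (cov16 n)

lemma cov_trans {n : ℕ} {x y z : GElt n} (h1 : cov16 n x y) (h2 : cov16 n y z) :
    cov16 n x z := by
  cases x <;> cases y <;> cases z <;> simp_all [cov16]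

lemma gle_iff {n : ℕ} (x y : GElt n) : Gle n x y ↔ x = y ∨ cov16 n x y := by
  constructor
  · intro h
    induction h with
    | refl => exact Or.inl rfl
    | tail h1 h2 ih =>
      rcases ih with rfl | hc
      · exact Or.inr h2
      · exact Or.inr (cov_trans hc h2)
  · rintro (rfl | h)
    · exact Relation.ReflTransGen.refl
    · exact Relation.ReflTransGen.single h

lemma b_max {n : ℕ} (j : Fin (n + 1)) : ∀ y, Gle n (.b j) y → y = .b j := by
  intro y h
  rcases (gle_iff _ _).1 h with rfl | h
  · rfl
  · cases y <;> simp [cov16] at h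

/-- The unique `b`-index NOT above `a i`. -/
def sig (n : ℕ) (i : Fin (n + 1)) : Fin (n + 1) :=
  if (i : ℕ) = 0 then Fin.last n else if (i : ℕ) = n then 0 else i

lemma cov_ab_iff {n : ℕ} (i j : Fin (n + 1)) :
    cov16 n (GElt.a i) (GElt.b j) ↔ (j : ℕ) ≠ (sig n i : ℕ) := by
  have hi := i.isLt
  have hj := j.isLt
  have h0 : ((0 : Fin (n + 1)) : ℕ) = 0 := rfl
  unfold sig
  split_ifs with h1 h2 <;> simp [cov16, Fin.last] <;> omega

lemma sig_inj {n : ℕ} {i i' : Fin (n + 1)} (h : (sig n i : ℕ) = (sig n i' : ℕ)) :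
    i = i' := by
  have hi := i.isLt
  have hi' := i'.isLt
  have h0 : ((0 : Fin (n + 1)) : ℕ) = 0 := rfl
  unfold sig at h
  apply Fin.ext
  split_ifs at h <;> (try simp [Fin.last] at h) <;> omega

lemma mem_M_b {n : ℕ} (x : GElt n) (j : Fin (n + 1)) :
    GElt.b j ∈ MsetR (Gle n) x ↔ Gle n x (.b j) :=
  ⟨fun h => h.1, fun h => ⟨h, b_max j⟩⟩

lemma gle_r_b {n : ℕ} (j : Fin (n + 1)) : Gle n .r (.b j) :=
  Relation.ReflTransGen.single trivial

lemma gle_a_b {n : ℕ} (i j : Fin (n + 1)) :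
    Gle n (.a i) (.b j) ↔ (j : ℕ) ≠ (sig n i : ℕ) := by
  rw [gle_iff]
  constructor
  · rintro (h | h)
    · cases h
    · exact (cov_ab_iff i j).1 h
  · intro h
    exact Or.inr ((cov_ab_iff i j).2 h)

lemma gle_b_b {n : ℕ} (k j : Fin (n + 1)) :
    Gle n (.b k) (.b j) ↔ j = k := by
  rw [gle_iff]
  constructor
  · rintro (h | h)
    · cases h; rfl
    · simp [cov16] at h
  · rintro rfl; exact Or.inl rfl

/-- for `n ≥ 3`, `Gₙ` is a poset (the reflexive-transitive
closure is antisymmetric) and it is strongly regular: distinct elements see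
distinct sets of maximal elements. -/
theorem stmt16 (n : ℕ) (hn : 3 ≤ n) :
    (∀ x y : GElt n, Gle n x y → Gle n y x → x = y) ∧
    (∀ x y : GElt n, MsetR (Gle n) x = MsetR (Gle n) y → x = y) := by
  constructor
  · intro x y hxy hyx
    rcases (gle_iff x y).1 hxy with rfl | h1
    · rfl
    rcases (gle_iff y x).1 hyx with rfl | h2
    · rfl
    exfalso
    cases x <;> cases y <;> simp_all [cov16]
  · intro x y hM
    have key : ∀ j : Fin (n + 1), Gle n x (.b j) ↔ Gle n y (.b j) := by
      intro j
      rw [← mem_M_b, ← mem_M_b, hM]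
    -- helper: two distinct indices avoiding a given value
    have pick2 : ∀ s : ℕ, ∃ j1 j2 : Fin (n + 1),
        (j1 : ℕ) ≠ s ∧ (j2 : ℕ) ≠ s ∧ j1 ≠ j2 := by
      intro s
      rcases eq_or_ne s 0 with rfl | h0
      · exact ⟨⟨1, by omega⟩, ⟨2, by omega⟩, by simp, by simp,
          by simp [Fin.ext_iff]⟩
      rcases eq_or_ne s 1 with rfl | h1
      · exact ⟨⟨0, by omega⟩, ⟨2, by omega⟩, by simp, by simp,
          by simp [Fin.ext_iff]⟩
      · exact ⟨⟨0, by omega⟩, ⟨1, by omega⟩, by simpa using h0.symm,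
          by simpa using h1.symm, by simp [Fin.ext_iff]⟩
    cases x with
    | r =>
      cases y with
      | r => rfl
      | a i =>
        exfalso
        have := (key (sig n i)).1 (gle_r_b _)
        rw [gle_a_b] at this
        exact this rfl
      | b k =>
        exfalso
        obtain ⟨j1, j2, _, _, hne⟩ := pick2 (k : ℕ) -- any two distinct indices suffice
        have h1 := (key j1).1 (gle_r_b _)
        have h2 := (key j2).1 (gle_r_b _)
        rw [gle_b_b] at h1 h2
        exact hne (h1.trans h2.symm)
    | a i =>
      cases y with
      | r =>
        exfalso
        have := (key (sig n i)).2 (gle_r_b _)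
        rw [gle_a_b] at this
        exact this rfl
      | a i' =>
        have h1 : ¬ Gle n (GElt.a i) (.b (sig n i)) := by
          rw [gle_a_b]; simp
        have h2 : ¬ Gle n (GElt.a i') (.b (sig n i')) := by
          rw [gle_a_b]; simp
        have e1 : (sig n i : ℕ) = (sig n i' : ℕ) := by
          by_contra hne
          exact h2 ((key (sig n i')).1 ((gle_a_b _ _).2 (Ne.symm hne)))
        rw [sig_inj e1]
      | b k =>
        exfalso
        obtain ⟨j1, j2, hs1, hs2, hne⟩ := pick2 ((sig n i : ℕ))
        have h1 := (key j1).1 ((gle_a_b _ _).2 hs1)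
        have h2 := (key j2).1 ((gle_a_b _ _).2 hs2)
        rw [gle_b_b] at h1 h2
        exact hne (h1.trans h2.symm)
    | b k =>
      cases y with
      | r =>
        exfalso
        obtain ⟨j1, j2, _, _, hne⟩ := pick2 (k : ℕ)
        have h1 := (key j1).2 (gle_r_b _)
        have h2 := (key j2).2 (gle_r_b _)
        rw [gle_b_b] at h1 h2
        exact hne (h1.trans h2.symm)
      | a i =>
        exfalso
        obtain ⟨j1, j2, hs1, hs2, hne⟩ := pick2 ((sig n i : ℕ))
        have h1 := (key j1).2 ((gle_a_b _ _).2 hs1)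
        have h2 := (key j2).2 ((gle_a_b _ _).2 hs2)
        rw [gle_b_b] at h1 h2
        exact hne (h1.trans h2.symm)
      | b k' =>
        have := (key k).1 ((gle_b_b k k).2 rfl)
        rw [gle_b_b] at this
        rw [this]
end
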